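/- arXiv:1707.08736 — 2 statements merged into one kernel-verified Lean document; each statement's English description precedes it below -/
import Mathlib

section
/- Given a CGS-SPC G and its corresponding CGS-EPC G′, for every joint memoryless strategy σ′_C of a coalition C ⊆ N in G′ there exists a joint memoryless strategy σ_C in G such that for all canonical states s′ of G′, Π(out(s′, σ′_C)) = out(s′ ∩ Φ, σ_C), where Π maps each G′-path λ′ to the G-path λ with λ[k] = λ′[2k] ∩ Φ. -/
open Set
open scoped Classical

structure CGS (Agent : Type) (Atom : Type) where
  ctrl : Agent → Set Atom
  d : Agent → Set Atom → Set (Set Atom)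
  trans : Set Atom → (Agent → Set Atom) → Set Atom

namespace CGS

variable {Agent Atom : Type}

/-- Well-formedness: nonempty protocol, and actions only use controlled atoms. -/
def WF (G : CGS Agent Atom) : Prop :=
  (∀ i s, (G.d i s).Nonempty) ∧ (∀ i s a, a ∈ G.d i s → a ⊆ G.ctrl i)

/-- Exclusive propositional control: disjoint, complete, and the transition is union. -/
def IsEPC (G : CGS Agent Atom) : Prop :=
  Pairwise (fun i j => Disjoint (G.ctrl i) (G.ctrl j)) ∧
  (⋃ i, G.ctrl i) = Set.univ ∧
  ∀ s α, G.trans s α = ⋃ i, α i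

def Act (G : CGS Agent Atom) (s : Set Atom) : Set (Agent → Set Atom) :=
  {α | ∀ i, α i ∈ G.d i s}

def Succ (G : CGS Agent Atom) (s : Set Atom) : Set (Set Atom) :=
  {t | ∃ α ∈ G.Act s, G.trans s α = t}

def IsPath (G : CGS Agent Atom) (lam : ℕ → Set Atom) : Prop :=
  ∀ k, lam (k + 1) ∈ G.Succ (lam k)

def ValidStrat (G : CGS Agent Atom) (C : Set Agent)
    (σ : Agent → Set Atom → Set Atom) : Prop :=
  ∀ i ∈ C, ∀ s, σ i s ∈ G.d i s

def out (G : CGS Agent Atom) (C : Set Agent)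
    (σ : Agent → Set Atom → Set Atom) (s : Set Atom) : Set (ℕ → Set Atom) :=
  {lam | lam 0 = s ∧ ∀ k, ∃ α ∈ G.Act (lam k),
    (∀ i ∈ C, α i = σ i (lam k)) ∧ lam (k + 1) = G.trans (lam k) α}

end CGS

/-- ATL* (path) formulas. -/
inductive Form (Agent Atom : Type) : Type where
  | atom : Atom → Form Agent Atom
  | neg : Form Agent Atom → Form Agent Atom
  | disj : Form Agent Atom → Form Agent Atom → Form Agent Atom
  | next : Form Agent Atom → Form Agent Atom
  | untl : Form Agent Atom → Form Agent Atom → Form Agent Atom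
  | coal : Set Agent → Form Agent Atom → Form Agent Atom

namespace Form

def size {Agent Atom : Type} : Form Agent Atom → ℕ
  | atom _ => 1
  | neg φ => φ.size + 1
  | disj φ ψ => φ.size + ψ.size + 1
  | next φ => φ.size + 1
  | untl φ ψ => φ.size + ψ.size + 1
  | coal _ φ => φ.size + 1

end Form

/-- State formulas of ATL*. -/
inductive IsStateForm {Agent Atom : Type} : Form Agent Atom → Prop where
  | atom (p : Atom) : IsStateForm (.atom p)
  | neg {φ} : IsStateForm φ → IsStateForm (.neg φ)
  | disj {φ ψ} : IsStateForm φ → IsStateForm ψ → IsStateForm (.disj φ ψ)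
  | coal (C : Set Agent) (φ : Form Agent Atom) : IsStateForm (.coal C φ)

def shiftSeq {α : Type} (lam : ℕ → α) (n : ℕ) : ℕ → α := fun k => lam (k + n)

/-- Satisfaction of an ATL* path formula along a computation (memoryless strategies). -/
def psat {Agent Atom : Type} (G : CGS Agent Atom) :
    Form Agent Atom → (ℕ → Set Atom) → Prop
  | .atom p, lam => p ∈ lam 0
  | .neg φ, lam => ¬ psat G φ lam
  | .disj φ ψ, lam => psat G φ lam ∨ psat G ψ lam
  | .next φ, lam => psat G φ (shiftSeq lam 1)
  | .untl φ ψ, lam => ∃ n, psat G ψ (shiftSeq lam n) ∧ ∀ m < n, psat G φ (shiftSeq lam m)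
  | .coal C φ, lam => ∃ σ, G.ValidStrat C σ ∧ ∀ μ ∈ G.out C σ (lam 0), psat G φ μ

/-- Satisfaction of an ATL* state formula at a state. -/
def ssat {Agent Atom : Type} (G : CGS Agent Atom) (φ : Form Agent Atom)
    (s : Set Atom) : Prop :=
  psat G φ (fun _ => s)

/-- Atoms of the associated exclusive-control structure: Φ ∪ {turn} ∪ {c_{ip}}. -/
abbrev Atom2 (Agent Atom : Type) : Type := Atom ⊕ (Unit ⊕ Agent × Atom)

/-- Agents of the associated exclusive-control structure: N ∪ {*}. -/
abbrev Agent2 (Agent : Type) : Type := Agent ⊕ Unit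

def turnV {Agent Atom : Type} : Atom2 Agent Atom := Sum.inr (Sum.inl ())

def baseV {Agent Atom : Type} (p : Atom) : Atom2 Agent Atom := Sum.inl p

def cV {Agent Atom : Type} (i : Agent) (p : Atom) : Atom2 Agent Atom :=
  Sum.inr (Sum.inr (i, p))

/-- Restriction of a state of `G'` to the atoms of `G` (s' ∩ Φ). -/
def restr {Agent Atom : Type} (s' : Set (Atom2 Agent Atom)) : Set Atom :=
  {p | baseV (Agent := Agent) p ∈ s'}

/-- Canonical state: agrees with `s` on Φ, all other variables false. -/
def canonical {Agent Atom : Type} (s : Set Atom) : Set (Atom2 Agent Atom) :=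
  Sum.inl '' s

/-- Read off a `G`-joint action from the `c_{ip}` variables of a `G'`-state. -/
def readAct {Agent Atom : Type} (G : CGS Agent Atom) (s' : Set (Atom2 Agent Atom)) :
    Agent → Set Atom :=
  fun i => {p | p ∈ G.ctrl i ∧ cV i p ∈ s'}

/-- The CGS-EPC `G'` corresponding to a CGS-SPC `G` (Definition 5 of the paper). -/
noncomputable def epcOf {Agent Atom : Type} (G : CGS Agent Atom) :
    CGS (Agent2 Agent) (Atom2 Agent Atom) where
  ctrl := fun j =>
    match j with
    | Sum.inl i => {q | ∃ p ∈ G.ctrl i, q = cV i p}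
    | Sum.inr _ => insert turnV (Set.range (baseV (Agent := Agent) (Atom := Atom)))
  d := fun j s' =>
    match j with
    | Sum.inl i =>
        if turnV ∈ s' then {∅}
        else {a | ∃ α ∈ G.d i (restr s'), a = cV i '' α}
    | Sum.inr _ =>
        if turnV ∈ s' then {baseV '' G.trans (restr s') (readAct G s')}
        else {insert turnV (baseV '' restr s')}
  trans := fun _ α => ⋃ j, α j

/-- Joint `G'`-action (α'₁,…,α'ₙ,+turn) encoding a `G`-action α at state s'. -/
def encAct {Agent Atom : Type} (_G : CGS Agent Atom) (s' : Set (Atom2 Agent Atom))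
    (α : Agent → Set Atom) : Agent2 Agent → Set (Atom2 Agent Atom) :=
  fun j =>
    match j with
    | Sum.inl i => cV i '' α i
    | Sum.inr _ => insert turnV (baseV '' restr s')

/-- Joint `G'`-action (∅,…,∅, τ(s' ∩ Φ, α)) performing the aggregation. -/
def aggAct {Agent Atom : Type} (G : CGS Agent Atom) (s' : Set (Atom2 Agent Atom))
    (α : Agent → Set Atom) : Agent2 Agent → Set (Atom2 Agent Atom) :=
  fun j =>
    match j with
    | Sum.inl _ => ∅
    | Sum.inr _ => baseV '' G.trans (restr s') α

/-- Projection Π of a `G'`-path to a `G`-path: λ[k] = λ'[2k] ∩ Φ. -/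
def projPath {Agent Atom : Type} (lam' : ℕ → Set (Atom2 Agent Atom)) : ℕ → Set Atom :=
  fun k => restr (lam' (2 * k))

/-- Condition (†): λ[k] = λ'[2k] ∩ Φ = λ'[2k+1] ∩ Φ for all k. -/
def Corr {Agent Atom : Type} (lam : ℕ → Set Atom)
    (lam' : ℕ → Set (Atom2 Agent Atom)) : Prop :=
  ∀ k, restr (lam' (2 * k)) = lam k ∧ restr (lam' (2 * k + 1)) = lam k

/-- Canonical `G'`-path associated to a `G`-path. -/
def CanonPath {Agent Atom : Type} (G : CGS Agent Atom) (lam : ℕ → Set Atom)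
    (lam' : ℕ → Set (Atom2 Agent Atom)) : Prop :=
  (epcOf G).IsPath lam' ∧ lam' 0 = canonical (lam 0) ∧ Corr lam lam'

/-- The translation `tr`: replaces X by XX, commutes with everything else. -/
def trF {Agent Atom : Type} : Form Agent Atom → Form (Agent2 Agent) (Atom2 Agent Atom)
  | .atom p => .atom (baseV p)
  | .neg φ => .neg (trF φ)
  | .disj φ ψ => .disj (trF φ) (trF ψ)
  | .next φ => .next (.next (trF φ))
  | .untl φ ψ => .untl (trF φ) (trF ψ)
  | .coal C φ => .coal (Sum.inl '' C) (trF φ)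

/-!
One round of `G` is simulated by two rounds of `G'`. At a canonical state (turn false) the agents
of `N` can only write a `G`-action into their control copies `c_{ip}` while `*` raises `turn`; at
the resulting odd state `N` is forced to play `∅` and `*` can only write the `G`-successor computed
from the `c_{ip}`, which is again a canonical state. So the even positions of a `σ'`-outcome from a
canonical state are canonical, the `G`-actions announced there are those of `σ`, and conversely
every `σ`-outcome lifts by interleaving these odd states.
-/

def chainsFrom {α : Type*} (R : α → α → Prop) (a : α) : Set (ℕ → α) :=
  {l | l 0 = a ∧ ∀ k, R (l k) (l (k + 1))}

theorem image_chainsFrom_of_twoStep {X Y : Type*} {R' : X → X → Prop} {R : Y → Y → Prop}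
    {e : Y → X} {r : X → Y} (hre : ∀ y, r (e y) = y)
    (hfwd : ∀ y u x, R' (e y) u → R' u x → ∃ y', R y y' ∧ x = e y')
    (hbwd : ∀ y y', R y y' → ∃ u, R' (e y) u ∧ R' u (e y')) (y : Y) :
    (fun l k => r (l (2 * k))) '' chainsFrom R' (e y) = chainsFrom R y := by
  ext ν
  constructor
  · rintro ⟨l, ⟨hl0, hl⟩, rfl⟩
    have hround : ∀ k, l (2 * k) = e (r (l (2 * k))) →
        R (r (l (2 * k))) (r (l (2 * (k + 1)))) ∧ l (2 * (k + 1)) = e (r (l (2 * (k + 1)))) := by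
      intro k hk
      obtain ⟨y', hy', hx⟩ := hfwd _ _ _ (hk ▸ hl (2 * k)) (hl (2 * k + 1))
      rw [show 2 * (k + 1) = 2 * k + 1 + 1 by ring, hx, hre]
      exact ⟨hy', rfl⟩
    have heven : ∀ k, l (2 * k) = e (r (l (2 * k))) := by
      intro k
      induction k with
      | zero => simp [hl0, hre]
      | succ k ih => exact (hround k ih).2
    exact ⟨by simp [hl0, hre], fun k => (hround k (heven k)).1⟩
  · rintro ⟨hν0, hν⟩
    choose u hu using fun k => hbwd _ _ (hν k)
    refine ⟨fun m => if m % 2 = 0 then e (ν (m / 2)) else u (m / 2), ⟨by simp [hν0], ?_⟩, ?_⟩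
    · intro m
      obtain ⟨k, rfl | rfl⟩ := Nat.even_or_odd' m
      · simpa [Nat.add_mod, show (2 * k + 1) / 2 = k by omega] using (hu k).1
      · simpa [Nat.add_mod, show (2 * k + 1 + 1) / 2 = k + 1 by omega,
          show (2 * k + 1) / 2 = k by omega] using (hu k).2
    · funext k
      simp [hre]

namespace CGS

variable {Agent Atom : Type}

def IsOutcomeStep (G : CGS Agent Atom) (C : Set Agent) (σ : Agent → Set Atom → Set Atom)
    (s t : Set Atom) : Prop :=
  ∃ α ∈ G.Act s, (∀ i ∈ C, α i = σ i s) ∧ t = G.trans s α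

theorem out_eq_chainsFrom (G : CGS Agent Atom) (C : Set Agent)
    (σ : Agent → Set Atom → Set Atom) (s : Set Atom) :
    G.out C σ s = chainsFrom (G.IsOutcomeStep C σ) s :=
  rfl

end CGS

section EpcOf

variable {Agent Atom : Type}

theorem cV_injective (i : Agent) : Function.Injective (cV (Atom := Atom) i) := by
  intro p q h
  simpa [cV] using h

theorem restr_canonical (s : Set Atom) : restr (Agent := Agent) (canonical s) = s := by
  ext p
  simp [restr, canonical, baseV]

theorem turnV_not_mem_canonical (s : Set Atom) :
    turnV (Agent := Agent) (Atom := Atom) ∉ canonical s := by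
  simp [turnV, canonical]

/-- The odd state of `G'` reached from a state with `G`-part `t` when the agents announce `β`. -/
def midState (t : Set Atom) (β : Agent → Set Atom) : Set (Atom2 Agent Atom) :=
  (⋃ i, cV i '' β i) ∪ insert turnV (baseV '' t)

theorem restr_midState (t : Set Atom) (β : Agent → Set Atom) : restr (midState t β) = t := by
  ext p
  simp [restr, midState, baseV, turnV, cV]

theorem turnV_mem_midState (t : Set Atom) (β : Agent → Set Atom) :
    turnV ∈ midState t β :=
  Or.inr (mem_insert _ _)

theorem cV_mem_midState_iff (t : Set Atom) (β : Agent → Set Atom) (i : Agent) (p : Atom) :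
    cV i p ∈ midState t β ↔ p ∈ β i := by
  simp [midState, cV, turnV, baseV]

theorem readAct_midState (G : CGS Agent Atom) (t : Set Atom) {β : Agent → Set Atom}
    (hβ : ∀ i, β i ⊆ G.ctrl i) : readAct G (midState t β) = β := by
  funext i
  ext p
  simpa [readAct, cV_mem_midState_iff] using fun hp => hβ i hp

theorem epcOf_trans_encAct (G : CGS Agent Atom) (s' : Set (Atom2 Agent Atom))
    (β : Agent → Set Atom) : (epcOf G).trans s' (encAct G s' β) = midState (restr s') β := by
  simp only [epcOf, encAct, midState, iUnion_sum, iUnion_const]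

theorem epcOf_trans_aggAct (G : CGS Agent Atom) (s' : Set (Atom2 Agent Atom))
    (α : Agent → Set Atom) :
    (epcOf G).trans s' (aggAct G s' α) = canonical (G.trans (restr s') α) := by
  simp only [epcOf, aggAct, canonical, baseV, iUnion_sum, iUnion_const, iUnion_empty,
    empty_union]
  rfl

theorem epcOf_d_inl_of_not_turn (G : CGS Agent Atom) {s' : Set (Atom2 Agent Atom)}
    (hs' : turnV ∉ s') (i : Agent) :
    (epcOf G).d (Sum.inl i) s' = (cV i '' ·) '' G.d i (restr s') := by
  ext a
  simp [epcOf, hs', eq_comm]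

theorem epcOf_d_inl_of_turn (G : CGS Agent Atom) {s' : Set (Atom2 Agent Atom)}
    (hs' : turnV ∈ s') (i : Agent) : (epcOf G).d (Sum.inl i) s' = {∅} := by
  simp [epcOf, hs']

theorem mem_epcOf_act_iff_of_not_turn (G : CGS Agent Atom) {s' : Set (Atom2 Agent Atom)}
    (hs' : turnV ∉ s') {α' : Agent2 Agent → Set (Atom2 Agent Atom)} :
    α' ∈ (epcOf G).Act s' ↔ ∃ β ∈ G.Act (restr s'), α' = encAct G s' β := by
  constructor
  · intro h
    have hinl : ∀ i, ∃ β ∈ G.d i (restr s'), cV i '' β = α' (Sum.inl i) := fun i => by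
      simpa [epcOf_d_inl_of_not_turn G hs'] using h (Sum.inl i)
    choose β hβ hβα using hinl
    have hinr := h (Sum.inr ())
    simp only [epcOf, hs', if_false, mem_singleton_iff] at hinr
    refine ⟨β, hβ, funext fun j => ?_⟩
    rcases j with i | ⟨⟩
    · exact (hβα i).symm
    · exact hinr
  · rintro ⟨β, hβ, rfl⟩ (i | ⟨⟩)
    · rw [epcOf_d_inl_of_not_turn G hs']
      exact mem_image_of_mem _ (hβ i)
    · simp [epcOf, encAct, hs']

theorem mem_epcOf_act_iff_of_turn (G : CGS Agent Atom) {s' : Set (Atom2 Agent Atom)}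
    (hs' : turnV ∈ s') {α' : Agent2 Agent → Set (Atom2 Agent Atom)} :
    α' ∈ (epcOf G).Act s' ↔ α' = aggAct G s' (readAct G s') := by
  constructor
  · intro h
    funext j
    rcases j with i | ⟨⟩
    · simpa [epcOf_d_inl_of_turn G hs', aggAct] using h (Sum.inl i)
    · simpa [epcOf, hs', aggAct] using h (Sum.inr ())
  · rintro rfl (i | ⟨⟩)
    · simp [epcOf_d_inl_of_turn G hs', aggAct]
    · simp [epcOf, aggAct, hs']

end EpcOf

section Projection

variable {Agent Atom : Type} {G : CGS Agent Atom} {C : Set Agent}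
  {σ' : Agent2 Agent → Set (Atom2 Agent Atom) → Set (Atom2 Agent Atom)}

/-- The paper's σᵢ(s) = {p | c_{ip} ∈ σ'ᵢ(s'⋆)}, with s'⋆ the canonical state of s. -/
def projStrat (σ' : Agent2 Agent → Set (Atom2 Agent Atom) → Set (Atom2 Agent Atom))
    (i : Agent) (s : Set Atom) : Set Atom :=
  cV i ⁻¹' σ' (Sum.inl i) (canonical s)

theorem exists_eq_image_cV_of_validStrat (hσ' : (epcOf G).ValidStrat (Sum.inl '' C) σ')
    {i : Agent} (hi : i ∈ C) (s : Set Atom) :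
    ∃ β ∈ G.d i s, cV i '' β = σ' (Sum.inl i) (canonical s) := by
  have h := hσ' _ (mem_image_of_mem _ hi) (canonical s)
  rwa [epcOf_d_inl_of_not_turn G (turnV_not_mem_canonical s), restr_canonical] at h

theorem projStrat_mem_d (hσ' : (epcOf G).ValidStrat (Sum.inl '' C) σ') {i : Agent} (hi : i ∈ C)
    (s : Set Atom) : projStrat σ' i s ∈ G.d i s := by
  obtain ⟨β, hβ, hβσ⟩ := exists_eq_image_cV_of_validStrat hσ' hi s
  rwa [projStrat, ← hβσ, preimage_image_eq _ (cV_injective i)]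

theorem image_cV_projStrat (hσ' : (epcOf G).ValidStrat (Sum.inl '' C) σ') {i : Agent}
    (hi : i ∈ C) (s : Set Atom) : cV i '' projStrat σ' i s = σ' (Sum.inl i) (canonical s) := by
  obtain ⟨β, -, hβσ⟩ := exists_eq_image_cV_of_validStrat hσ' hi s
  rw [projStrat, ← hβσ, preimage_image_eq _ (cV_injective i)]

theorem isOutcomeStep_of_epcOf_round (hWF : G.WF)
    (hσ' : (epcOf G).ValidStrat (Sum.inl '' C) σ') {t : Set Atom} {u x : Set (Atom2 Agent Atom)}
    (h₁ : (epcOf G).IsOutcomeStep (Sum.inl '' C) σ' (canonical t) u)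
    (h₂ : (epcOf G).IsOutcomeStep (Sum.inl '' C) σ' u x) :
    ∃ t', G.IsOutcomeStep C (projStrat σ') t t' ∧ x = canonical t' := by
  obtain ⟨α', hα', hCα', rfl⟩ := h₁
  obtain ⟨β, hβ, rfl⟩ := (mem_epcOf_act_iff_of_not_turn G (turnV_not_mem_canonical t)).1 hα'
  rw [restr_canonical] at hβ
  rw [epcOf_trans_encAct, restr_canonical] at h₂
  obtain ⟨α'', hα'', -, rfl⟩ := h₂
  rw [(mem_epcOf_act_iff_of_turn G (turnV_mem_midState t β)).1 hα'', epcOf_trans_aggAct,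
    restr_midState, readAct_midState G t fun i => hWF.2 i t _ (hβ i)]
  refine ⟨_, ⟨β, hβ, fun i hi => (cV_injective i).image_injective ?_, rfl⟩, rfl⟩
  rw [image_cV_projStrat hσ' hi]
  exact hCα' _ (mem_image_of_mem _ hi)

theorem epcOf_round_of_isOutcomeStep (hWF : G.WF)
    (hσ' : (epcOf G).ValidStrat (Sum.inl '' C) σ') {t t' : Set Atom}
    (h : G.IsOutcomeStep C (projStrat σ') t t') :
    ∃ u, (epcOf G).IsOutcomeStep (Sum.inl '' C) σ' (canonical t) u ∧
      (epcOf G).IsOutcomeStep (Sum.inl '' C) σ' u (canonical t') := by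
  obtain ⟨β, hβ, hCβ, rfl⟩ := h
  have hturn : turnV ∈ midState t β := turnV_mem_midState t β
  refine ⟨midState t β, ⟨encAct G (canonical t) β, ?_, ?_, ?_⟩,
    ⟨aggAct G (midState t β) β, ?_, ?_, ?_⟩⟩
  · rw [mem_epcOf_act_iff_of_not_turn G (turnV_not_mem_canonical t), restr_canonical]
    exact ⟨β, hβ, rfl⟩
  · rintro _ ⟨i, hi, rfl⟩
    show cV i '' β i = _
    rw [hCβ i hi, image_cV_projStrat hσ' hi]
  · rw [epcOf_trans_encAct, restr_canonical]
  · rw [mem_epcOf_act_iff_of_turn G hturn, readAct_midState G t fun i => hWF.2 i t _ (hβ i)]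
  · rintro _ ⟨i, hi, rfl⟩
    have h := hσ' _ (mem_image_of_mem _ hi) (midState t β)
    rw [epcOf_d_inl_of_turn G hturn] at h
    exact h.symm
  · rw [epcOf_trans_aggAct, restr_midState]

end Projection

/-- Lemma 2.2: every joint strategy of `G'` is simulated by one of `G`,
for outcomes starting at canonical states. -/
theorem strategy_project_from_epcOf {Agent Atom : Type} (G : CGS Agent Atom)
    (hWF : G.WF) (C : Set Agent)
    (σ' : Agent2 Agent → Set (Atom2 Agent Atom) → Set (Atom2 Agent Atom))
    (hσ' : (epcOf G).ValidStrat (Sum.inl '' C) σ') :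
    ∃ σ : Agent → Set Atom → Set Atom,
      G.ValidStrat C σ ∧
      ∀ s : Set Atom,
        projPath '' ((epcOf G).out (Sum.inl '' C) σ' (canonical s)) =
          G.out C σ s := by
  refine ⟨projStrat σ', fun i hi s => projStrat_mem_d hσ' hi s, fun s => ?_⟩
  rw [CGS.out_eq_chainsFrom, CGS.out_eq_chainsFrom]
  exact image_chainsFrom_of_twoStep restr_canonical
    (fun _ _ _ h₁ h₂ => isOutcomeStep_of_epcOf_round hWF hσ' h₁ h₂)
    (fun _ _ h => epcOf_round_of_isOutcomeStep hWF hσ' h) s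
end

section
/- In the CGS-EPC G′ corresponding to a CGS-SPC G, every state s′ reachable from a canonical state satisfies: if turn ∉ s′ then the joint actions enabled at s′ are exactly tuples (α′₁,…,α′ₙ, +turn) where α′ᵢ encodes an action αᵢ ∈ d(i, s′ ∩ Φ) of G, and if turn ∈ s′ then the unique joint action enabled at s′ is (∅,…,∅, τ(s′ ∩ Φ, α)) with αᵢ(p) = 1 iff c_{ip} ∈ s′. Consequently, along any G′-path from a canonical state, turn alternates: false at even indices and true at odd indices. -/
open Set
open scoped Classical

/-- Reachability from a canonical state in `G'`. -/
def ReachCanon {Agent Atom : Type} (G : CGS Agent Atom)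
    (s' : Set (Atom2 Agent Atom)) : Prop :=
  ∃ (s : Set Atom) (lam' : ℕ → Set (Atom2 Agent Atom)) (k : ℕ),
    (epcOf G).IsPath lam' ∧ lam' 0 = canonical s ∧ lam' k = s'

/-! The protocol of `G'` branches on `turn`. With `turn` false, each agent of `G` plays the
encoding of one of its actions and `*` sets `turn`; with `turn` true, the agents of `G` are forced
to `∅` and `*` writes `τ(s' ∩ Φ, α)`, which contains no `turn`. So every transition of `G'` flips
`turn`, and canonical states start with `turn` false. -/

section

variable {Agent Atom : Type} (G : CGS Agent Atom) {s' : Set (Atom2 Agent Atom)}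

theorem CGS.act_eq_pi (s : Set Atom) : G.Act s = univ.pi (G.d · s) := by
  ext α
  simp [CGS.Act]

theorem turnV_notMem_canonical (s : Set Atom) : turnV ∉ canonical (Agent := Agent) s := by
  simp [canonical, turnV]

theorem epcOf_act_of_turnV_notMem (h : turnV ∉ s') :
    (epcOf G).Act s' =
      {α' | ∃ α : Agent → Set Atom, (∀ i, α i ∈ G.d i (restr s')) ∧ α' = encAct G s' α} := by
  ext α'
  simp only [CGS.Act, epcOf, if_neg h, mem_ofPred_eq, mem_singleton_iff, Sum.forall]
  constructor
  · rintro ⟨hagents, hstar⟩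
    choose α hα hα' using hagents
    refine ⟨α, hα, funext ?_⟩
    rintro (i | ⟨⟩)
    exacts [hα' i, hstar ()]
  · rintro ⟨α, hα, rfl⟩
    exact ⟨fun i => ⟨α i, hα i, rfl⟩, fun _ => rfl⟩

theorem epcOf_act_of_turnV_mem (h : turnV ∈ s') :
    (epcOf G).Act s' = {aggAct G s' (readAct G s')} := by
  have hd : ∀ j, (epcOf G).d j s' = {aggAct G s' (readAct G s') j} := by
    rintro (i | ⟨⟩) <;> simp [epcOf, h, aggAct]
  simp only [CGS.act_eq_pi, hd, univ_pi_singleton]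

theorem turnV_mem_iff_of_mem_epcOf_succ {t : Set (Atom2 Agent Atom)}
    (ht : t ∈ (epcOf G).Succ s') : turnV ∈ t ↔ turnV ∉ s' := by
  obtain ⟨α', hα', rfl⟩ := ht
  by_cases h : turnV ∈ s'
  · rw [epcOf_act_of_turnV_mem G h, mem_singleton_iff] at hα'
    subst hα'
    simp only [h, not_true_eq_false, iff_false]
    simp [epcOf, aggAct, turnV, baseV]
  · rw [epcOf_act_of_turnV_notMem G h] at hα'
    obtain ⟨α, -, rfl⟩ := hα'
    simp only [h, not_false_eq_true, iff_true]
    exact mem_iUnion.2 ⟨Sum.inr (), mem_insert turnV _⟩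

theorem turnV_mem_iff_odd {lam' : ℕ → Set (Atom2 Agent Atom)} (hpath : (epcOf G).IsPath lam')
    (h0 : turnV ∉ lam' 0) (n : ℕ) : turnV ∈ lam' n ↔ Odd n := by
  induction n with
  | zero => simpa using h0
  | succ n ih => rw [turnV_mem_iff_of_mem_epcOf_succ G (hpath n), ih, Nat.odd_add_one]

end

theorem epcOf_act_characterisation_general {Agent Atom : Type} (G : CGS Agent Atom) :
    (∀ s' : Set (Atom2 Agent Atom), ReachCanon G s' →
      (turnV ∉ s' →
        (epcOf G).Act s' =
          {α' | ∃ α : Agent → Set Atom,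
            (∀ i, α i ∈ G.d i (restr s')) ∧ α' = encAct G s' α}) ∧
      (turnV ∈ s' →
        (epcOf G).Act s' = {aggAct G s' (readAct G s')})) ∧
    (∀ lam' : ℕ → Set (Atom2 Agent Atom), (epcOf G).IsPath lam' →
      (∃ s : Set Atom, lam' 0 = canonical s) →
      ∀ k, turnV ∉ lam' (2 * k) ∧ turnV ∈ lam' (2 * k + 1)) := by
  refine ⟨fun s' _ => ⟨epcOf_act_of_turnV_notMem G, epcOf_act_of_turnV_mem G⟩, ?_⟩
  rintro lam' hpath ⟨s, h0⟩ k
  have hstart : turnV ∉ lam' 0 := h0 ▸ turnV_notMem_canonical s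
  simp [turnV_mem_iff_odd G hpath hstart]

/-- characterisation of the enabled joint actions of `G'` at states
reachable from a canonical state, and alternation of `turn` along paths from
canonical states. -/
theorem epcOf_act_characterisation {Agent Atom : Type} (G : CGS Agent Atom)
    (hWF : G.WF) :
    (∀ s' : Set (Atom2 Agent Atom), ReachCanon G s' →
      (turnV ∉ s' →
        (epcOf G).Act s' =
          {α' | ∃ α : Agent → Set Atom,
            (∀ i, α i ∈ G.d i (restr s')) ∧ α' = encAct G s' α}) ∧
      (turnV ∈ s' →
        (epcOf G).Act s' = {aggAct G s' (readAct G s')})) ∧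
    (∀ lam' : ℕ → Set (Atom2 Agent Atom), (epcOf G).IsPath lam' →
      (∃ s : Set Atom, lam' 0 = canonical s) →
      ∀ k, turnV ∉ lam' (2 * k) ∧ turnV ∈ lam' (2 * k + 1)) :=
  epcOf_act_characterisation_general G
end
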